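/- Let E be a real inner product space and N ≥ 1. For each i = 1,…,N let f_i : E → ℝ be differentiable with L_i-Lipschitz gradient, ρ_i > 0, μ_i > 0 with ρ_i μ_i > 2 L_i². Let sequences (U_i^k)_k, (Z^k)_k, (Y_i^k)_k in E satisfy for every k and every i: (i) ∇f_i(U_i^k) = −Y_i^k; (ii) U_i^{k+1} globally minimizes the μ_i-strongly convex function U ↦ f_i(U) + ⟨Y_i^k, U − Z^k⟩ + (ρ_i/2)‖U − Z^k‖²; (iii) Z^{k+1} globally minimizes Z ↦ 𝓛({U_i^{k+1}}, Z, {Y_i^k}); (iv) ∇f_i(U_i^{k+1}) + Y_i^k + ρ_i(U_i^{k+1} − Z^{k+1}) = 0; (v) Y_i^{k+1} = Y_i^k + ρ_i(U_i^{k+1} − Z^{k+1}). Assume the Lagrangian values are bounded below: 𝓛({U_i^k}, Z^k, {Y_i^k}) ≥ 𝓛̲ > −∞ for all k. Then the sequence of values 𝓛({U_i^k}, Z^k, {Y_i^k}) is nonincreasing and converges to a limit ≥ 𝓛̲, the successive differences satisfy ‖U_i^{k+1} − U_i^k‖ → 0 and ‖Z^{k+1} − Z^k‖ → 0, and the consensus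 residual vanishes: ‖U_i^{k+1} − Z^{k+1}‖ → 0 for every i. -/
import Mathlib

open scoped RealInnerProductSpace
open Filter

/-- The augmented Lagrangian of the FedPCA consensus problem. -/
noncomputable def augLag {E : Type*} [NormedAddCommGroup E] [InnerProductSpace ℝ E]
    (N : ℕ) (f : Fin N → E → ℝ) (ρ : Fin N → ℝ)
    (U : Fin N → E) (Z : E) (Y : Fin N → E) : ℝ :=
  (∑ i, f i (U i)) + (∑ i, ⟪Y i, U i - Z⟫) + (∑ i, ρ i / 2 * ‖U i - Z‖ ^ 2)

lemma strong_min_gap {E : Type*} [NormedAddCommGroup E] [InnerProductSpace ℝ E]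
    (g : E → ℝ) (μ : ℝ) (hμ : 0 < μ)
    (hconv : ConvexOn ℝ Set.univ (fun x => g x - μ / 2 * ‖x‖ ^ 2))
    (xs : E) (hmin : ∀ x, g xs ≤ g x) (x : E) :
    g xs + μ / 2 * ‖x - xs‖ ^ 2 ≤ g x := by
  have key : ∀ t : ℝ, 0 < t → t < 1 →
      (1 - t) * (μ / 2 * ‖x - xs‖ ^ 2) ≤ g x - g xs := by
    intro t ht ht1
    have hb : (0:ℝ) ≤ 1 - t := by linarith
    have hcv := hconv.2 (Set.mem_univ x) (Set.mem_univ xs) ht.le hb (by ring)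
    simp only [smul_eq_mul] at hcv
    have hid : ‖t • x + (1 - t) • xs‖ ^ 2
        = t * ‖x‖ ^ 2 + (1 - t) * ‖xs‖ ^ 2 - t * (1 - t) * ‖x - xs‖ ^ 2 := by
      have h1 := norm_add_sq_real (t • x) ((1 - t) • xs)
      have h2 := norm_sub_sq_real x xs
      rw [real_inner_smul_left, real_inner_smul_right] at h1
      rw [norm_smul, norm_smul, mul_pow, mul_pow, Real.norm_eq_abs, Real.norm_eq_abs,
        sq_abs, sq_abs] at h1
      rw [h1, h2]; ring
    have hmin' := hmin (t • x + (1 - t) • xs)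
    rw [hid] at hcv
    nlinarith [hcv, hmin']
  have hD : 0 ≤ μ / 2 * ‖x - xs‖ ^ 2 := by positivity
  have hA : 0 ≤ g x - g xs := by linarith [hmin x]
  rw [← sub_nonneg]
  have : μ / 2 * ‖x - xs‖ ^ 2 ≤ g x - g xs := by
    set c := μ / 2 * ‖x - xs‖ ^ 2 with hc
    set A := g x - g xs with hAdef
    by_contra hlt
    push_neg at hlt
    have hc0 : 0 < c := lt_of_le_of_lt hA hlt
    have ht0 : 0 < (c - A) / (2 * c) := div_pos (by linarith) (by linarith)
    have ht1 : (c - A) / (2 * c) < 1 := by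
      rw [div_lt_one (by linarith)]; linarith
    have hk := key _ ht0 ht1
    have hx : (c - A) / (2 * c) * (2 * c) = c - A := div_mul_cancel₀ _ (by linarith)
    nlinarith [hk, hx]
  linarith

lemma convexOn_const_add_inner {E : Type*} [NormedAddCommGroup E] [InnerProductSpace ℝ E]
    (c : ℝ) (w : E) : ConvexOn ℝ Set.univ (fun z : E => c + ⟪w, z⟫) := by
  refine ⟨convex_univ, fun x _ y _ a b ha hb hab => ?_⟩
  simp only [smul_eq_mul, inner_add_right, real_inner_smul_right]
  apply le_of_eq
  linear_combination (-c) * hab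

lemma zconv {E : Type*} [NormedAddCommGroup E] [InnerProductSpace ℝ E]
    (N : ℕ) (f : Fin N → E → ℝ) (ρ : Fin N → ℝ) (U Y : Fin N → E) :
    ConvexOn ℝ Set.univ
      (fun Z' => augLag N f ρ U Z' Y - (∑ i, ρ i) / 2 * ‖Z'‖ ^ 2) := by
  have hmain := convexOn_const_add_inner
    ((∑ i, f i (U i)) + (∑ i, ⟪Y i, U i⟫) + (∑ i, ρ i / 2 * ‖U i‖ ^ 2))
    (-((∑ i, Y i) + ∑ i, ρ i • U i)) (E := E)
  apply hmain.congr
  intro Z' _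
  have e2 : ∑ i, ⟪Y i, U i - Z'⟫ = (∑ i, ⟪Y i, U i⟫) - ∑ i, ⟪Y i, Z'⟫ := by
    rw [← Finset.sum_sub_distrib]
    exact Finset.sum_congr rfl fun i _ => inner_sub_right _ _ _
  have e3 : ∑ i, ρ i / 2 * ‖U i - Z'‖ ^ 2
      = ((∑ i, ρ i / 2 * ‖U i‖ ^ 2) - ∑ i, ρ i * ⟪U i, Z'⟫)
        + (∑ i, ρ i) / 2 * ‖Z'‖ ^ 2 := by
    calc ∑ i, ρ i / 2 * ‖U i - Z'‖ ^ 2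
        = ∑ i, ((ρ i / 2 * ‖U i‖ ^ 2 - ρ i * ⟪U i, Z'⟫) + ρ i / 2 * ‖Z'‖ ^ 2) :=
          Finset.sum_congr rfl fun i _ => by rw [norm_sub_sq_real]; ring
      _ = _ := by
          rw [Finset.sum_add_distrib, Finset.sum_sub_distrib, ← Finset.sum_mul,
            ← Finset.sum_div]
  have e5 : ⟪-((∑ i, Y i) + ∑ i, ρ i • U i), Z'⟫
      = -((∑ i, ⟪Y i, Z'⟫) + ∑ i, ρ i * ⟪U i, Z'⟫) := by
    rw [inner_neg_left, inner_add_left, sum_inner, sum_inner]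
    congr 2
    exact Finset.sum_congr rfl fun i _ => real_inner_smul_left _ _ _
  simp only [augLag]
  rw [e2, e3, e5]
  ring

lemma augLag_eq_sum {E : Type*} [NormedAddCommGroup E] [InnerProductSpace ℝ E]
    (N : ℕ) (f : Fin N → E → ℝ) (ρ : Fin N → ℝ) (U : Fin N → E) (Z : E) (Y : Fin N → E) :
    augLag N f ρ U Z Y
      = ∑ i, (f i (U i) + ⟪Y i, U i - Z⟫ + ρ i / 2 * ‖U i - Z‖ ^ 2) := by
  simp [augLag, Finset.sum_add_distrib]

lemma tendsto_of_sq_tendsto {a : ℕ → ℝ} (h0 : ∀ k, 0 ≤ a k)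
    (h : Tendsto (fun k => (a k) ^ 2) atTop (nhds 0)) :
    Tendsto a atTop (nhds 0) := by
  have h1 := (Real.continuous_sqrt.tendsto 0).comp h
  rw [Real.sqrt_zero] at h1
  refine h1.congr fun k => ?_
  simp only [Function.comp]
  exact Real.sqrt_sq (h0 k)
/-- Theorem 1 (convergence of the augmented Lagrangian and satisfaction of the
consensus constraint, full participation): under `ρᵢ μᵢ > 2Lᵢ²` and the ADMM
update/optimality conditions, with the Lagrangian values bounded below by `𝓛̲`,
the Lagrangian values are nonincreasing and converge to a limit `≥ 𝓛̲`, the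
successive differences `‖Uᵢᵏ⁺¹ - Uᵢᵏ‖` and `‖Zᵏ⁺¹ - Zᵏ‖` tend to `0`, and the
consensus residual `‖Uᵢᵏ⁺¹ - Zᵏ⁺¹‖ → 0` for every `i`. -/
theorem stmt_7 {E : Type*} [NormedAddCommGroup E] [InnerProductSpace ℝ E] [CompleteSpace E]
    (N : ℕ) (hN : 1 ≤ N)
    (f : Fin N → E → ℝ) (f' : Fin N → E → E)
    (L ρ μ : Fin N → ℝ) (hL : ∀ i, 0 ≤ L i) (hρ : ∀ i, 0 < ρ i) (hμ : ∀ i, 0 < μ i)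
    (hcond : ∀ i, 2 * (L i) ^ 2 < ρ i * μ i)
    (hdiff : ∀ i x, HasGradientAt (f i) (f' i x) x)
    (hlip : ∀ i x y, ‖f' i x - f' i y‖ ≤ L i * ‖x - y‖)
    (U : Fin N → ℕ → E) (Z : ℕ → E) (Y : Fin N → ℕ → E)
    (hprev : ∀ i k, f' i (U i k) = -(Y i k))
    (hsc : ∀ i k, ConvexOn ℝ Set.univ
      (fun V => (f i V + ⟪Y i k, V - Z k⟫ + ρ i / 2 * ‖V - Z k‖ ^ 2) - μ i / 2 * ‖V‖ ^ 2))
    (hUmin : ∀ i k (V : E),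
      f i (U i (k + 1)) + ⟪Y i k, U i (k + 1) - Z k⟫ + ρ i / 2 * ‖U i (k + 1) - Z k‖ ^ 2 ≤
        f i V + ⟪Y i k, V - Z k⟫ + ρ i / 2 * ‖V - Z k‖ ^ 2)
    (hZmin : ∀ k (Z' : E),
      augLag N f ρ (fun i => U i (k + 1)) (Z (k + 1)) (fun i => Y i k) ≤
        augLag N f ρ (fun i => U i (k + 1)) Z' (fun i => Y i k))
    (hopt : ∀ i k, f' i (U i (k + 1)) + Y i k + ρ i • (U i (k + 1) - Z (k + 1)) = 0)
    (hdual : ∀ i k, Y i (k + 1) = Y i k + ρ i • (U i (k + 1) - Z (k + 1)))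
    (Lbar : ℝ)
    (hbdd : ∀ k, Lbar ≤ augLag N f ρ (fun i => U i k) (Z k) (fun i => Y i k)) :
    (∀ k, augLag N f ρ (fun i => U i (k + 1)) (Z (k + 1)) (fun i => Y i (k + 1)) ≤
        augLag N f ρ (fun i => U i k) (Z k) (fun i => Y i k)) ∧
    (∃ c : ℝ, Lbar ≤ c ∧
      Tendsto (fun k => augLag N f ρ (fun i => U i k) (Z k) (fun i => Y i k)) atTop (nhds c)) ∧
    (∀ i, Tendsto (fun k => ‖U i (k + 1) - U i k‖) atTop (nhds 0)) ∧
    (Tendsto (fun k => ‖Z (k + 1) - Z k‖) atTop (nhds 0)) ∧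
    (∀ i, Tendsto (fun k => ‖U i (k + 1) - Z (k + 1)‖) atTop (nhds 0)) := by
  set 𝓛 : ℕ → ℝ := fun k => augLag N f ρ (fun i => U i k) (Z k) (fun i => Y i k) with h𝓛
  set σ : ℝ := ∑ i, ρ i with hσdef
  have hσ : 0 < σ := Finset.sum_pos (fun i _ => hρ i) ⟨⟨0, hN⟩, Finset.mem_univ _⟩
  have hc : ∀ i, 0 < μ i / 2 - (L i) ^ 2 / ρ i := by
    intro i
    rw [sub_pos, div_lt_div_iff₀ (hρ i) (by norm_num : (0:ℝ) < 2)]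
    nlinarith [hcond i]
  -- dual variable difference
  have hY : ∀ i k, Y i (k + 1) - Y i k = f' i (U i k) - f' i (U i (k + 1)) := by
    intro i k
    have h1 := hopt i k
    have h4 : f' i (U i (k + 1)) = -(Y i k + ρ i • (U i (k + 1) - Z (k + 1))) := by
      rw [add_assoc] at h1
      exact eq_neg_of_add_eq_zero_left h1
    rw [hdual i k, hprev i k, h4]
    abel
  -- residual bound
  have hr : ∀ i k, ρ i * ‖U i (k + 1) - Z (k + 1)‖ ≤ L i * ‖U i (k + 1) - U i k‖ := by
    intro i k
    have hs : ρ i • (U i (k + 1) - Z (k + 1)) = Y i (k + 1) - Y i k := by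
      rw [hdual i k]; abel
    calc ρ i * ‖U i (k + 1) - Z (k + 1)‖
        = ‖ρ i • (U i (k + 1) - Z (k + 1))‖ := by
          rw [norm_smul, Real.norm_eq_abs, abs_of_pos (hρ i)]
      _ = ‖f' i (U i k) - f' i (U i (k + 1))‖ := by rw [hs, hY i k]
      _ ≤ L i * ‖U i k - U i (k + 1)‖ := hlip i _ _
      _ = L i * ‖U i (k + 1) - U i k‖ := by rw [norm_sub_rev]
  -- main descent inequality
  have hdesc : ∀ k,
      (∑ i, (μ i / 2 - (L i) ^ 2 / ρ i) * ‖U i (k + 1) - U i k‖ ^ 2)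
        + σ / 2 * ‖Z (k + 1) - Z k‖ ^ 2 ≤ 𝓛 k - 𝓛 (k + 1) := by
    intro k
    -- Step 1 : U-update decreases the Lagrangian
    have step1 : augLag N f ρ (fun i => U i (k + 1)) (Z k) (fun i => Y i k)
        + ∑ i, μ i / 2 * ‖U i (k + 1) - U i k‖ ^ 2 ≤ 𝓛 k := by
      have hA1 : ∀ i : Fin N,
          (f i (U i (k + 1)) + ⟪Y i k, U i (k + 1) - Z k⟫
            + ρ i / 2 * ‖U i (k + 1) - Z k‖ ^ 2)
          + μ i / 2 * ‖U i k - U i (k + 1)‖ ^ 2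
          ≤ f i (U i k) + ⟪Y i k, U i k - Z k⟫ + ρ i / 2 * ‖U i k - Z k‖ ^ 2 :=
        fun i => strong_min_gap
          (fun V => f i V + ⟪Y i k, V - Z k⟫ + ρ i / 2 * ‖V - Z k‖ ^ 2)
          (μ i) (hμ i) (hsc i k) (U i (k + 1)) (hUmin i k) (U i k)
      have hsum := Finset.sum_le_sum (fun i (_ : i ∈ Finset.univ) => hA1 i)
      rw [Finset.sum_add_distrib] at hsum
      have hnr : ∑ i, μ i / 2 * ‖U i k - U i (k + 1)‖ ^ 2
          = ∑ i, μ i / 2 * ‖U i (k + 1) - U i k‖ ^ 2 :=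
        Finset.sum_congr rfl fun i _ => by rw [norm_sub_rev]
      rw [hnr] at hsum
      simp only [h𝓛]
      rw [augLag_eq_sum, augLag_eq_sum]
      exact hsum
    -- Step 2 : Z-update decreases the Lagrangian
    have step2 : augLag N f ρ (fun i => U i (k + 1)) (Z (k + 1)) (fun i => Y i k)
        + σ / 2 * ‖Z k - Z (k + 1)‖ ^ 2
        ≤ augLag N f ρ (fun i => U i (k + 1)) (Z k) (fun i => Y i k) :=
      strong_min_gap
        (fun Z' => augLag N f ρ (fun i => U i (k + 1)) Z' (fun i => Y i k))
        σ hσ (zconv N f ρ _ _) (Z (k + 1)) (hZmin k) (Z k)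
    -- Step 3 : dual update increases the Lagrangian by a controlled amount
    have step3 : 𝓛 (k + 1)
        = augLag N f ρ (fun i => U i (k + 1)) (Z (k + 1)) (fun i => Y i k)
          + ∑ i, ρ i * ‖U i (k + 1) - Z (k + 1)‖ ^ 2 := by
      simp only [h𝓛]
      rw [augLag_eq_sum, augLag_eq_sum, ← Finset.sum_add_distrib]
      refine Finset.sum_congr rfl fun i _ => ?_
      rw [hdual i k, inner_add_left, real_inner_smul_left, real_inner_self_eq_norm_sq]
      ring
    -- Step 4 : bound the dual ascent term
    have step4 : ∑ i, ρ i * ‖U i (k + 1) - Z (k + 1)‖ ^ 2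
        ≤ ∑ i, (L i) ^ 2 / ρ i * ‖U i (k + 1) - U i k‖ ^ 2 := by
      refine Finset.sum_le_sum fun i _ => ?_
      have h2 : (ρ i * ‖U i (k + 1) - Z (k + 1)‖) ^ 2
          ≤ (L i * ‖U i (k + 1) - U i k‖) ^ 2 :=
        pow_le_pow_left₀ (mul_nonneg (hρ i).le (norm_nonneg _)) (hr i k) 2
      rw [div_mul_eq_mul_div, le_div_iff₀ (hρ i)]
      nlinarith [h2, hρ i, sq_nonneg ‖U i (k + 1) - Z (k + 1)‖]
    have sum_split : ∑ i, (μ i / 2 - (L i) ^ 2 / ρ i) * ‖U i (k + 1) - U i k‖ ^ 2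
        = (∑ i, μ i / 2 * ‖U i (k + 1) - U i k‖ ^ 2)
          - ∑ i, (L i) ^ 2 / ρ i * ‖U i (k + 1) - U i k‖ ^ 2 := by
      rw [← Finset.sum_sub_distrib]
      exact Finset.sum_congr rfl fun i _ => by ring
    have hnr2 : ‖Z k - Z (k + 1)‖ = ‖Z (k + 1) - Z k‖ := norm_sub_rev _ _
    rw [hnr2] at step2
    linarith [step1, step2, step4]
  have hterm_nonneg : ∀ k,
      0 ≤ (∑ i, (μ i / 2 - (L i) ^ 2 / ρ i) * ‖U i (k + 1) - U i k‖ ^ 2)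
        + σ / 2 * ‖Z (k + 1) - Z k‖ ^ 2 := fun k =>
    add_nonneg
      (Finset.sum_nonneg fun i _ => mul_nonneg (hc i).le (sq_nonneg _))
      (mul_nonneg (by positivity) (sq_nonneg _))
  have hmono : ∀ k, 𝓛 (k + 1) ≤ 𝓛 k := fun k => by
    linarith [hdesc k, hterm_nonneg k]
  have hanti : Antitone 𝓛 := antitone_nat_of_succ_le hmono
  have hbddb : BddBelow (Set.range 𝓛) := ⟨Lbar, by rintro _ ⟨k, rfl⟩; exact hbdd k⟩
  have htend : Tendsto 𝓛 atTop (nhds (⨅ k, 𝓛 k)) := tendsto_atTop_ciInf hanti hbddb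
  have hLbarle : Lbar ≤ ⨅ k, 𝓛 k := le_ciInf fun k => hbdd k
  have htend1 : Tendsto (fun k => 𝓛 (k + 1)) atTop (nhds (⨅ k, 𝓛 k)) :=
    htend.comp (tendsto_add_atTop_nat 1)
  have hdiff0 : Tendsto (fun k => 𝓛 k - 𝓛 (k + 1)) atTop (nhds 0) := by
    have := htend.sub htend1
    simpa using this
  -- U differences go to zero
  have hUi : ∀ i, Tendsto (fun k => ‖U i (k + 1) - U i k‖) atTop (nhds 0) := by
    intro i
    have hsq : Tendsto
        (fun k => (μ i / 2 - (L i) ^ 2 / ρ i) * ‖U i (k + 1) - U i k‖ ^ 2)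
        atTop (nhds 0) := by
      refine squeeze_zero (fun k => mul_nonneg (hc i).le (sq_nonneg _))
        (fun k => ?_) hdiff0
      have hs : (μ i / 2 - (L i) ^ 2 / ρ i) * ‖U i (k + 1) - U i k‖ ^ 2
          ≤ ∑ j, (μ j / 2 - (L j) ^ 2 / ρ j) * ‖U j (k + 1) - U j k‖ ^ 2 :=
        Finset.single_le_sum
          (f := fun j => (μ j / 2 - (L j) ^ 2 / ρ j) * ‖U j (k + 1) - U j k‖ ^ 2)
          (fun j _ => mul_nonneg (hc j).le (sq_nonneg _)) (Finset.mem_univ i)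
      have hz : 0 ≤ σ / 2 * ‖Z (k + 1) - Z k‖ ^ 2 :=
        mul_nonneg (by positivity) (sq_nonneg _)
      linarith [hdesc k]
    have hsq2 : Tendsto (fun k => ‖U i (k + 1) - U i k‖ ^ 2) atTop (nhds 0) := by
      have h2 := hsq.const_mul (μ i / 2 - (L i) ^ 2 / ρ i)⁻¹
      rw [mul_zero] at h2
      refine h2.congr fun k => ?_
      rw [← mul_assoc, inv_mul_cancel₀ (hc i).ne', one_mul]
    exact tendsto_of_sq_tendsto (fun k => norm_nonneg _) hsq2
  -- Z differences go to zero
  have hZ0 : Tendsto (fun k => ‖Z (k + 1) - Z k‖) atTop (nhds 0) := by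
    have hsq : Tendsto (fun k => σ / 2 * ‖Z (k + 1) - Z k‖ ^ 2) atTop (nhds 0) := by
      refine squeeze_zero (fun k => mul_nonneg (by positivity) (sq_nonneg _))
        (fun k => ?_) hdiff0
      have hs : 0 ≤ ∑ j, (μ j / 2 - (L j) ^ 2 / ρ j) * ‖U j (k + 1) - U j k‖ ^ 2 :=
        Finset.sum_nonneg fun j _ => mul_nonneg (hc j).le (sq_nonneg _)
      linarith [hdesc k]
    have hsq2 : Tendsto (fun k => ‖Z (k + 1) - Z k‖ ^ 2) atTop (nhds 0) := by
      have h2 := hsq.const_mul (σ / 2)⁻¹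
      rw [mul_zero] at h2
      refine h2.congr fun k => ?_
      rw [← mul_assoc, inv_mul_cancel₀ (by positivity : (0:ℝ) < σ / 2).ne', one_mul]
    exact tendsto_of_sq_tendsto (fun k => norm_nonneg _) hsq2
  -- consensus residual goes to zero
  have hres : ∀ i, Tendsto (fun k => ‖U i (k + 1) - Z (k + 1)‖) atTop (nhds 0) := by
    intro i
    have hbnd : ∀ k, ‖U i (k + 1) - Z (k + 1)‖ ≤ L i / ρ i * ‖U i (k + 1) - U i k‖ := by
      intro k
      rw [div_mul_eq_mul_div, le_div_iff₀ (hρ i)]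
      have := hr i k
      nlinarith [this]
    have hlim : Tendsto (fun k => L i / ρ i * ‖U i (k + 1) - U i k‖) atTop (nhds 0) := by
      have := (hUi i).const_mul (L i / ρ i)
      rwa [mul_zero] at this
    exact squeeze_zero (fun k => norm_nonneg _) hbnd hlim
  exact ⟨hmono, ⟨⨅ k, 𝓛 k, hLbarle, htend⟩, hUi, hZ0, hres⟩
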